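/- In the full dynamics with initial acyclic priority map D⁰ (orienting each edge {j,k} from the larger to the smaller index), all-thinking initial activity map, and updates D' = d_H(D, ā'), the priority map D remains acyclic at every step. -/
import Mathlib


inductive Act : Type
  | t | h | e
deriving DecidableEq, Repr

def switch : Act → Act
  | Act.t => Act.h
  | Act.h => Act.e
  | Act.e => Act.t

def fP (a : Act) (b : Bool) : Act := if b then switch a else a

inductive Cmd : Type
  | pass | force (b : Bool)
deriving DecidableEq

def fS (a : Act) (b : Bool) : Cmd → Act
  | Cmd.pass => fP a b
  | Cmd.force b' => fP a b'

/-- The updated priority relation `dH D a`: edge `j ↦ k` of `D` is reversed when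
`a j = e`, or when `a j = t` and `a k = h`; otherwise kept. -/
def dH {V : Type*} (D : V → V → Prop) (a : V → Act) : V → V → Prop :=
  fun j k =>
    (D j k ∧ ¬ (a j = Act.e ∨ (a j = Act.t ∧ a k = Act.h))) ∨
    (D k j ∧ (a k = Act.e ∨ (a k = Act.t ∧ a j = Act.h)))

/-- `D` is a priority map for `E`: it orients each edge of `E` exactly one way. -/
def IsPriorityMap {V : Type*} (E D : V → V → Prop) : Prop :=
  (∀ j k, D j k → E j k) ∧ (∀ j k, E j k → (D j k ↔ ¬ D k j))

def topD {V : Type*} (E D : V → V → Prop) (j : V) : Prop := ∀ k, E j k → D j k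

def ready {V : Type*} (E D : V → V → Prop) (a : V → Act) (j : V) : Prop :=
  a j = Act.h ∧ topD E D j ∧ ∀ k, E j k → a k ≠ Act.e

open scoped Classical in
noncomputable def gH {V : Type*} (E D : V → V → Prop) (a : V → Act) (j : V) : Cmd :=
  if a j = Act.t ∨ a j = Act.e then Cmd.pass
  else if ready E D a j then Cmd.force true else Cmd.force false

/-- One step of the polled dynamics of the philosophers under the hub controller. -/
noncomputable def nextA {V : Type*} (E D : V → V → Prop) (a : V → Act) (b : V → Bool) :
    V → Act :=
  fun j => fS (a j) (b j) (gH E D a j)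

def safe {V : Type*} (E : V → V → Prop) (a : V → Act) : Prop :=
  ∀ j k, E j k → ¬ (a j = Act.e ∧ a k = Act.e)

def Acyclic {V : Type*} (D : V → V → Prop) : Prop :=
  ∀ j, ¬ Relation.TransGen D j j


/-- Rank lemma: if every `D'` edge either strictly decreases `f` or preserves `f`
and is a `D` edge, and `D` is acyclic, then `D'` is acyclic. -/
lemma acyclic_of_rank {V : Type*} (f : V → ℕ) (D D' : V → V → Prop)
    (hD : Acyclic D)
    (h : ∀ j k, D' j k → f k < f j ∨ (f j = f k ∧ D j k)) :
    Acyclic D' := by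
  have key : ∀ j k, Relation.TransGen D' j k →
      f k < f j ∨ (f j = f k ∧ Relation.TransGen D j k) := by
    intro j k hjk
    induction hjk with
    | single hs =>
      rcases h _ _ hs with h1 | ⟨h1, h2⟩
      · exact Or.inl h1
      · exact Or.inr ⟨h1, Relation.TransGen.single h2⟩
    | tail _ hs ih =>
      rcases h _ _ hs with h1 | ⟨h1, h2⟩
      · rcases ih with ih | ⟨ih, _⟩
        · exact Or.inl (h1.trans ih)
        · exact Or.inl (ih ▸ h1)
      · rcases ih with ih | ⟨ih, ih2⟩
        · exact Or.inl (h1 ▸ ih)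
        · exact Or.inr ⟨ih.trans h1, ih2.tail h2⟩
  intro j hj
  rcases key _ _ hj with h1 | ⟨_, h2⟩
  · exact lt_irrefl _ h1
  · exact hD j h2

def rank : Act → ℕ
  | Act.e => 0
  | Act.t => 1
  | Act.h => 2

/-- Characterisation of when a node is eating after one step. -/
lemma nextA_eq_e {V : Type*} (E D : V → V → Prop) (a : V → Act) (b : V → Bool) (j : V)
    (h : nextA E D a b j = Act.e) :
    a j = Act.e ∨ (a j = Act.h ∧ ready E D a j) := by
  unfold nextA gH at h
  cases ha : a j with
  | t => rw [ha] at h; simp [fS, fP] at h; cases hb : b j <;> simp [hb, switch] at h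
  | e => exact Or.inl rfl
  | h =>
    rw [ha] at h; simp at h
    by_cases hr : ready E D a j
    · exact Or.inr ⟨rfl, hr⟩
    · simp [hr, fS, fP] at h

/-- Safety is preserved by one step, given acyclicity of the priority map. -/
lemma safe_step {V : Type*} (E D : V → V → Prop) (hE_symm : ∀ j k, E j k → E k j)
    (a : V → Act) (b : V → Bool) (hsafe : safe E a) (hacyc : Acyclic D) :
    safe E (nextA E D a b) := by
  intro j k hjk ⟨hj, hk⟩
  rcases nextA_eq_e E D a b j hj with hje | ⟨_, hjr⟩ <;>
    rcases nextA_eq_e E D a b k hk with hke | ⟨_, hkr⟩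
  · exact hsafe j k hjk ⟨hje, hke⟩
  · exact hkr.2.2 j (hE_symm j k hjk) hje
  · exact hjr.2.2 k hjk hke
  · have h1 : D j k := hjr.2.1 k hjk
    have h2 : D k j := hkr.2.1 j (hE_symm j k hjk)
    exact hacyc j ((Relation.TransGen.single h1).trans (Relation.TransGen.single h2))

/-- Acyclicity is preserved by `dH` with a safe activity map. -/
lemma acyclic_dH {V : Type*} (E D : V → V → Prop) (hE_symm : ∀ j k, E j k → E k j)
    (hsub : ∀ j k, D j k → E j k) (a : V → Act) (hsafe : safe E a)
    (hacyc : Acyclic D) : Acyclic (dH D a) := by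
  apply acyclic_of_rank (fun j => rank (a j)) D _ hacyc
  intro j k hjk
  rcases hjk with ⟨hD, hn⟩ | ⟨hD, hc⟩
  · -- edge j ↦ k kept
    rcases not_or.1 hn with ⟨hne, hnth⟩
    cases haj : a j with
    | e => exact absurd haj hne
    | t =>
      cases hak : a k with
      | e => exact Or.inl (by simp [rank])
      | t => exact Or.inr ⟨by simp [rank], hD⟩
      | h => exact absurd ⟨haj, hak⟩ hnth
    | h =>
      cases hak : a k with
      | e => exact Or.inl (by simp [rank])
      | t => exact Or.inl (by simp [rank])
      | h => exact Or.inr ⟨by simp [rank], hD⟩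
  · -- edge k ↦ j reversed
    rcases hc with hak | ⟨hak, haj⟩
    · cases haj : a j with
      | e => exact (hsafe k j (hsub k j hD) ⟨hak, haj⟩).elim
      | t => exact Or.inl (by simp [rank, haj, hak])
      | h => exact Or.inl (by simp [rank, haj, hak])
    · exact Or.inl (by simp [rank, haj, hak])

theorem priority_map_acyclic_always {N : ℕ} (E : Fin N → Fin N → Prop)
    (hE_irr : ∀ j, ¬ E j j) (hE_symm : ∀ j k, E j k → E k j)
    (A : ℕ → Fin N → Act) (Ds : ℕ → Fin N → Fin N → Prop) (b : ℕ → Fin N → Bool)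
    (hA0 : ∀ j, A 0 j = Act.t)
    (hD0 : ∀ j k, Ds 0 j k ↔ (E j k ∧ k < j))
    (hAstep : ∀ i, A (i + 1) = nextA E (Ds i) (A i) (b i))
    (hDstep : ∀ i, Ds (i + 1) = dH (Ds i) (A (i + 1))) :
    ∀ i, Acyclic (Ds i) := by
  have inv : ∀ i, safe E (A i) ∧ (∀ j k, Ds i j k → E j k) ∧ Acyclic (Ds i) := by
    intro i
    induction i with
    | zero =>
      refine ⟨?_, ?_, ?_⟩
      · intro j k _ ⟨hj, _⟩; rw [hA0 j] at hj; exact Act.noConfusion hj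
      · intro j k h; exact ((hD0 j k).1 h).1
      · apply acyclic_of_rank (fun j : Fin N => (j : ℕ)) (fun _ _ => False)
        · have hemp : ∀ a c : Fin N, Relation.TransGen (fun _ _ => False) a c → False := by
            intro a c h
            induction h with
            | single hs => exact hs
            | tail _ hs _ => exact hs
          exact fun j hj => hemp j j hj
        · intro j k h
          exact Or.inl ((hD0 j k).1 h).2
    | succ n ih =>
      obtain ⟨hsafe, hsub, hacyc⟩ := ih
      have hsafe' : safe E (A (n + 1)) := by
        rw [hAstep n]; exact safe_step E (Ds n) hE_symm (A n) (b n) hsafe hacyc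
      refine ⟨hsafe', ?_, ?_⟩
      · intro j k h
        rw [hDstep n] at h
        rcases h with ⟨h, _⟩ | ⟨h, _⟩
        · exact hsub j k h
        · exact hE_symm k j (hsub k j h)
      · rw [hDstep n]
        exact acyclic_dH E (Ds n) hE_symm hsub (A (n + 1)) hsafe' hacyc
  exact fun i => (inv i).2.2
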